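/- arXiv:1804.09198 — 2 statements merged into one kernel-verified Lean document; each statement's English description precedes it below -/
import Mathlib

section
/- If P is the transition matrix of an irreducible, aperiodic, reversible Markov chain on a finite state space χ with stationary distribution π, and β* = max{β₁, |β_{|χ|-1}|} is the second largest eigenvalue in absolute value, then for all x ∈ χ and k ∈ ℕ: 4‖P^k(x,·) − π‖²_var ≤ ((1−π(x))/π(x))·(β*)^{2k}. -/
open Matrix

private lemma conj_pow_aux {χ : Type*} [Fintype χ] [DecidableEq χ]
    (D P D' : Matrix χ χ ℝ) (hDD' : D * D' = 1) (hD'D : D' * D = 1) (k : ℕ) :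
    (D * P * D') ^ k = D * P ^ k * D' := by
  induction k with
  | zero => simp [hDD']
  | succ k ih =>
      rw [pow_succ, pow_succ, ih]
      simp only [Matrix.mul_assoc]
      rw [← Matrix.mul_assoc D' D, hD'D, Matrix.one_mul]

private lemma unit_dot_aux {χ : Type*} [Fintype χ] [DecidableEq χ]
    {O : Matrix χ χ ℝ} (h : Oᵀ * O = 1) (v : χ → ℝ) :
    (O *ᵥ v) ⬝ᵥ (O *ᵥ v) = v ⬝ᵥ v := by
  rw [Matrix.dotProduct_mulVec, ← Matrix.mulVec_transpose, Matrix.mulVec_mulVec, h,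
    Matrix.one_mulVec]

theorem diaconis_stroock_total_variation
    {χ : Type*} [Fintype χ] [DecidableEq χ] [Nonempty χ]
    (P : Matrix χ χ ℝ) (π : χ → ℝ)
    (hP0 : ∀ x y, 0 ≤ P x y) (hP1 : ∀ x, ∑ y, P x y = 1)
    (hπpos : ∀ x, 0 < π x) (hπ1 : ∑ x, π x = 1)
    (hrev : ∀ x y, π x * P x y = π y * P y x)
    (hirr : ∀ x y, ∃ k : ℕ, 0 < (P ^ k) x y)
    (haper : ∀ x y, ∃ N : ℕ, ∀ k : ℕ, N ≤ k → 0 < (P ^ k) x y)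
    (β : ℝ) (hβ0 : 0 ≤ β)
    (hβ : ∀ μ : ℝ, μ ∈ spectrum ℝ P → μ ≠ 1 → |μ| ≤ β) :
    ∀ (x : χ) (k : ℕ),
      (∑ y, |(P ^ k) x y - π y|) ^ 2 ≤ (1 - π x) / π x * β ^ (2 * k) := by
  intro x k
  classical
  set s : χ → ℝ := fun y => Real.sqrt (π y) with hs_def
  have hspos : ∀ y, 0 < s y := fun y => Real.sqrt_pos.2 (hπpos y)
  have hsne : ∀ y, s y ≠ 0 := fun y => (hspos y).ne'
  have hssq : ∀ y, s y * s y = π y := fun y => Real.mul_self_sqrt (hπpos y).le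
  set D : Matrix χ χ ℝ := Matrix.diagonal s with hD_def
  set D' : Matrix χ χ ℝ := Matrix.diagonal (fun y => (s y)⁻¹) with hD'_def
  have hDD' : D * D' = 1 := by
    rw [hD_def, hD'_def, Matrix.diagonal_mul_diagonal]
    rw [show (fun y => s y * (s y)⁻¹) = fun _ : χ => (1:ℝ) from
      funext fun y => mul_inv_cancel₀ (hsne y), Matrix.diagonal_one]
  have hD'D : D' * D = 1 := by
    rw [hD_def, hD'_def, Matrix.diagonal_mul_diagonal]
    rw [show (fun y => (s y)⁻¹ * s y) = fun _ : χ => (1:ℝ) from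
      funext fun y => inv_mul_cancel₀ (hsne y), Matrix.diagonal_one]
  set S : Matrix χ χ ℝ := D * P * D' with hS_def
  have hSentry : ∀ y z, S y z = s y * P y z * (s z)⁻¹ := by
    intro y z
    rw [hS_def, Matrix.mul_diagonal, Matrix.diagonal_mul]
  have hSk : S ^ k = D * P ^ k * D' := conj_pow_aux D P D' hDD' hD'D k
  have hSkentry : ∀ y z, (S ^ k) y z = s y * (P ^ k) y z * (s z)⁻¹ := by
    intro y z
    rw [hSk, Matrix.mul_diagonal, Matrix.diagonal_mul]
  have hsymT : Sᵀ = S := by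
    ext y z
    rw [Matrix.transpose_apply, hSentry, hSentry]
    have h := hrev z y
    rw [← hssq z, ← hssq y] at h
    field_simp [hsne y, hsne z]
    linear_combination h
  have hsym : S.IsHermitian := by
    rw [Matrix.IsHermitian, Matrix.conjTranspose_eq_transpose_of_trivial]
    exact hsymT
  -- stationarity
  have hstat : ∀ y, ∑ z, π z * P z y = π y := by
    intro y
    calc ∑ z, π z * P z y = ∑ z, π y * P y z := Finset.sum_congr rfl fun z _ => hrev z y
      _ = π y * ∑ z, P y z := by rw [Finset.mul_sum]
      _ = π y := by rw [hP1 y, mul_one]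
  have hstatk : ∀ (m : ℕ) (y : χ), ∑ z, π z * (P ^ m) z y = π y := by
    intro m
    induction m with
    | zero => intro y; simp [Matrix.one_apply, Finset.sum_ite_eq]
    | succ m ih =>
        intro y
        rw [pow_succ]
        simp only [Matrix.mul_apply, Finset.mul_sum]
        rw [Finset.sum_comm]
        calc ∑ w, ∑ z, π z * ((P ^ m) z w * P w y)
            = ∑ w, π w * P w y := by
              refine Finset.sum_congr rfl fun w _ => ?_
              simp_rw [← mul_assoc]
              rw [← Finset.sum_mul, ih w]
          _ = π y := hstat y
  -- powers stochastic
  have hpow0 : ∀ (m : ℕ) (a b : χ), 0 ≤ (P ^ m) a b := by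
    intro m
    induction m with
    | zero =>
        intro a b
        by_cases h : a = b <;> simp [Matrix.one_apply, h]
    | succ m ih =>
        intro a b
        rw [pow_succ, Matrix.mul_apply]
        exact Finset.sum_nonneg fun w _ => mul_nonneg (ih a w) (hP0 w b)
  have hpow1 : ∀ (m : ℕ) (a : χ), ∑ b, (P ^ m) a b = 1 := by
    intro m
    induction m with
    | zero => intro a; simp [Matrix.one_apply]
    | succ m ih =>
        intro a
        rw [pow_succ]
        simp only [Matrix.mul_apply]
        rw [Finset.sum_comm]
        calc ∑ w, ∑ b, (P ^ m) a w * P w b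
            = ∑ w, (P ^ m) a w := by
              refine Finset.sum_congr rfl fun w _ => ?_
              rw [← Finset.mul_sum, hP1 w, mul_one]
          _ = 1 := ih a
  -- harmonic functions are constant
  have hconst : ∀ f : χ → ℝ, P *ᵥ f = f → ∀ z w, f z = f w := by
    intro f hf
    have hfk : ∀ m, (P ^ m) *ᵥ f = f := by
      intro m
      induction m with
      | zero => simp
      | succ m ih => rw [pow_succ, ← Matrix.mulVec_mulVec, hf, ih]
    have key : ∀ y₀, (∀ a, f a ≤ f y₀) → ∀ z, f z = f y₀ := by
      intro y₀ hmax z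
      obtain ⟨m, hm⟩ := hirr y₀ z
      have h1 : ∑ w, (P ^ m) y₀ w * f w = f y₀ := by
        have := congrFun (hfk m) y₀
        simpa [Matrix.mulVec, dotProduct] using this
      have h2 : ∑ w, (P ^ m) y₀ w * (f y₀ - f w) = 0 := by
        simp only [mul_sub]
        rw [Finset.sum_sub_distrib, h1, ← Finset.sum_mul, hpow1 m y₀, one_mul, sub_self]
      have h3 := (Finset.sum_eq_zero_iff_of_nonneg
        (fun w _ => mul_nonneg (hpow0 m y₀ w) (sub_nonneg.2 (hmax w)))).1 h2 z
        (Finset.mem_univ z)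
      rcases mul_eq_zero.1 h3 with h | h
      · exact absurd h (ne_of_gt hm)
      · linarith
    obtain ⟨y₀, -, hy₀⟩ := Finset.exists_max_image Finset.univ f
      ⟨Classical.arbitrary χ, Finset.mem_univ _⟩
    intro z w
    rw [key y₀ (fun a => hy₀ a (Finset.mem_univ a)) z,
      key y₀ (fun a => hy₀ a (Finset.mem_univ a)) w]
  -- spectrum transfer
  have hspecS : ∀ μ : ℝ, μ ∈ spectrum ℝ S → μ ∈ spectrum ℝ P := by
    intro μ hμ
    rw [spectrum.mem_iff] at hμ ⊢
    intro hunit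
    apply hμ
    have heq : algebraMap ℝ (Matrix χ χ ℝ) μ - S = D * (algebraMap ℝ (Matrix χ χ ℝ) μ - P) * D' := by
      rw [Matrix.mul_sub, Matrix.sub_mul, hS_def]
      congr 1
      rw [Algebra.algebraMap_eq_smul_one, Matrix.mul_smul, Matrix.mul_one, Matrix.smul_mul, hDD']
    rw [heq]
    have hDu : IsUnit D := ⟨⟨D, D', hDD', hD'D⟩, rfl⟩
    have hD'u : IsUnit D' := ⟨⟨D', D, hD'D, hDD'⟩, rfl⟩
    exact (hDu.mul hunit).mul hD'u
  -- spectral theorem for S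
  set U : Matrix χ χ ℝ := (hsym.eigenvectorUnitary : Matrix χ χ ℝ) with hU_def
  set d : χ → ℝ := hsym.eigenvalues with hd_def
  have hstarU : star U = Uᵀ := by
    rw [hU_def, Matrix.star_eq_conjTranspose, Matrix.conjTranspose_eq_transpose_of_trivial]
  have hU1 : Uᵀ * U = 1 := by rw [← hstarU]; exact Unitary.coe_star_mul_self _
  have hU2 : U * Uᵀ = 1 := by rw [← hstarU]; exact Unitary.coe_mul_star_self _
  have hspecth : S = U * Matrix.diagonal d * Uᵀ := by
    rw [← hstarU]
    simpa using hsym.spectral_theorem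
  have hSU : S * U = U * Matrix.diagonal d := by
    rw [hspecth, Matrix.mul_assoc (U * Matrix.diagonal d) Uᵀ U, hU1, Matrix.mul_one]
  have hSpow : S ^ k = U * Matrix.diagonal (fun i => d i ^ k) * Uᵀ := by
    rw [hspecth, conj_pow_aux U (Matrix.diagonal d) Uᵀ hU2 hU1 k, Matrix.diagonal_pow]
    rfl
  -- the vector w₀
  set w₀ : χ → ℝ := fun y => ((if y = x then (1:ℝ) else 0) - π y) / s y with hw₀_def
  have hSksym : ∀ y z, (S ^ k) y z = (S ^ k) z y := by
    have h : (S ^ k)ᵀ = S ^ k := by rw [Matrix.transpose_pow, hsymT]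
    intro y z
    exact (congrFun (congrFun h.symm y) z).trans (Matrix.transpose_apply _ _ _)
  have hvec : S ^ k *ᵥ w₀ = fun y => ((P ^ k) x y - π y) / s y := by
    funext y
    have e1 : (S ^ k *ᵥ w₀) y = ∑ z, (S ^ k) z y * w₀ z := by
      simp only [Matrix.mulVec, dotProduct]
      exact Finset.sum_congr rfl fun z _ => by rw [hSksym y z]
    rw [e1]
    have e2 : ∀ z, (S ^ k) z y * w₀ z
        = (s y)⁻¹ * (((if z = x then (1:ℝ) else 0) - π z) * (P ^ k) z y) := by
      intro z
      rw [hSkentry]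
      simp only [hw₀_def]
      rw [div_eq_mul_inv]
      have hz : s z * (s z)⁻¹ = 1 := mul_inv_cancel₀ (hsne z)
      calc s z * (P ^ k) z y * (s y)⁻¹ * (((if z = x then (1:ℝ) else 0) - π z) * (s z)⁻¹)
          = (s y)⁻¹ * (((if z = x then (1:ℝ) else 0) - π z) * (P ^ k) z y) * (s z * (s z)⁻¹) := by
            ring
        _ = (s y)⁻¹ * (((if z = x then (1:ℝ) else 0) - π z) * (P ^ k) z y) := by
            rw [hz, mul_one]
    rw [Finset.sum_congr rfl fun z _ => e2 z, ← Finset.mul_sum]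
    have e3 : ∑ z, ((if z = x then (1:ℝ) else 0) - π z) * (P ^ k) z y
        = (P ^ k) x y - π y := by
      simp only [sub_mul]
      rw [Finset.sum_sub_distrib]
      congr 1
      · simp [Finset.sum_ite_eq']
      · exact hstatk k y
    rw [e3, div_eq_inv_mul]
  set v : χ → ℝ := Uᵀ *ᵥ w₀ with hv_def
  have hw₀v : U *ᵥ v = w₀ := by
    rw [hv_def, Matrix.mulVec_mulVec, hU2, Matrix.one_mulVec]
  have hnorm_v : v ⬝ᵥ v = w₀ ⬝ᵥ w₀ := by
    conv_rhs => rw [← hw₀v]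
    exact (unit_dot_aux hU1 v).symm
  have hSkw₀ : S ^ k *ᵥ w₀ = U *ᵥ (fun i => d i ^ k * v i) := by
    have hdv : (Matrix.diagonal fun i => d i ^ k) *ᵥ v = fun i => d i ^ k * v i := by
      funext i
      rw [Matrix.mulVec_diagonal]
    rw [hSpow, ← Matrix.mulVec_mulVec, ← hv_def, ← Matrix.mulVec_mulVec, hdv]
  have hchisq : (S ^ k *ᵥ w₀) ⬝ᵥ (S ^ k *ᵥ w₀) = ∑ i, (d i ^ k * v i) ^ 2 := by
    rw [hSkw₀, unit_dot_aux hU1]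
    simp [dotProduct, sq]
  -- key bound on each coordinate
  have hbound : ∀ i, (d i ^ k * v i) ^ 2 ≤ β ^ (2 * k) * v i ^ 2 := by
    intro i
    by_cases hdi : d i = 1
    · -- eigenvalue 1 : coordinate vanishes
      have hcol : S *ᵥ (fun y => U y i) = fun y => U y i := by
        funext y
        have h := congrFun (congrFun hSU y) i
        rw [Matrix.mul_apply, Matrix.mul_diagonal] at h
        simp only [Matrix.mulVec, dotProduct]
        rw [h, hdi, mul_one]
      have hPf : P *ᵥ (fun y => U y i / s y) = fun y => U y i / s y := by
        funext y
        have h1 : ∑ z, S y z * U z i = U y i := congrFun hcol y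
        simp only [Matrix.mulVec, dotProduct]
        calc ∑ z, P y z * (U z i / s z)
            = (s y)⁻¹ * ∑ z, S y z * U z i := by
              rw [Finset.mul_sum]
              refine Finset.sum_congr rfl fun z _ => ?_
              rw [hSentry, div_eq_mul_inv]
              have hy : (s y)⁻¹ * s y = 1 := inv_mul_cancel₀ (hsne y)
              calc P y z * (U z i * (s z)⁻¹)
                  = ((s y)⁻¹ * s y) * (P y z * (s z)⁻¹ * U z i) := by rw [hy]; ring
                _ = (s y)⁻¹ * (s y * P y z * (s z)⁻¹ * U z i) := by ring
          _ = U y i / s y := by rw [h1, div_eq_inv_mul]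
      set c : ℝ := U (Classical.arbitrary χ) i / s (Classical.arbitrary χ) with hc_def
      have hUc : ∀ y, U y i = c * s y := by
        intro y
        have h : U y i / s y = c := hconst _ hPf y (Classical.arbitrary χ)
        rw [div_eq_iff (hsne y)] at h
        exact h
      have hvi : v i = 0 := by
        rw [hv_def]
        simp only [Matrix.mulVec, dotProduct, Matrix.transpose_apply]
        calc ∑ y, U y i * w₀ y
            = ∑ y, c * ((if y = x then (1:ℝ) else 0) - π y) := by
              refine Finset.sum_congr rfl fun y _ => ?_
              rw [hUc y]
              simp only [hw₀_def]
              rw [div_eq_mul_inv]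
              have hy : s y * (s y)⁻¹ = 1 := mul_inv_cancel₀ (hsne y)
              calc c * s y * (((if y = x then (1:ℝ) else 0) - π y) * (s y)⁻¹)
                  = c * ((if y = x then (1:ℝ) else 0) - π y) * (s y * (s y)⁻¹) := by ring
                _ = c * ((if y = x then (1:ℝ) else 0) - π y) := by rw [hy, mul_one]
          _ = 0 := by
              rw [← Finset.mul_sum, Finset.sum_sub_distrib]
              simp [Finset.sum_ite_eq', hπ1]
      rw [hvi]
      simp
    · have hmem : d i ∈ spectrum ℝ P := hspecS _ (hsym.eigenvalues_mem_spectrum_real i)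
      have habs : |d i| ≤ β := hβ (d i) hmem hdi
      have h1 : d i ^ 2 ≤ β ^ 2 := by
        have := abs_le.1 habs
        nlinarith [this.1, this.2]
      calc (d i ^ k * v i) ^ 2 = (d i ^ 2) ^ k * v i ^ 2 := by ring
        _ ≤ (β ^ 2) ^ k * v i ^ 2 :=
            mul_le_mul_of_nonneg_right (pow_le_pow_left₀ (sq_nonneg _) h1 k) (sq_nonneg _)
        _ = β ^ (2 * k) * v i ^ 2 := by rw [← pow_mul]
  -- norm of w₀
  have hw₀norm : w₀ ⬝ᵥ w₀ = (1 - π x) / π x := by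
    simp only [dotProduct, hw₀_def]
    have e : ∀ y, ((if y = x then (1:ℝ) else 0) - π y) / s y
        * (((if y = x then (1:ℝ) else 0) - π y) / s y)
        = ((if y = x then (1:ℝ) else 0) - π y) ^ 2 / π y := by
      intro y
      rw [div_mul_div_comm, hssq, sq]
    rw [Finset.sum_congr rfl fun y _ => e y,
      ← Finset.sum_erase_add _ _ (Finset.mem_univ x)]
    have hx : ((if x = x then (1:ℝ) else 0) - π x) ^ 2 / π x = (1 - π x) ^ 2 / π x := by simp
    have herase : ∑ y ∈ Finset.univ.erase x, ((if y = x then (1:ℝ) else 0) - π y) ^ 2 / π y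
        = ∑ y ∈ Finset.univ.erase x, π y := by
      refine Finset.sum_congr rfl fun y hy => ?_
      rw [if_neg (Finset.ne_of_mem_erase hy)]
      have h0 : ((0:ℝ) - π y) ^ 2 = π y ^ 2 := by ring
      rw [h0, sq, mul_div_assoc, div_self (hπpos y).ne', mul_one]
    have hsum : ∑ y ∈ Finset.univ.erase x, π y = 1 - π x := by
      have := Finset.sum_erase_add Finset.univ π (Finset.mem_univ x)
      rw [hπ1] at this
      linarith
    rw [herase, hsum, hx, eq_div_iff (hπpos x).ne', add_mul,
      div_mul_cancel₀ _ (hπpos x).ne']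
    ring
  -- Cauchy–Schwarz
  have hCS : (∑ y, |(P ^ k) x y - π y|) ^ 2 ≤ ∑ y, ((P ^ k) x y - π y) ^ 2 / π y := by
    have h := Finset.sq_sum_div_le_sum_sq_div Finset.univ
      (fun y => |(P ^ k) x y - π y|) (fun y _ => hπpos y)
    rw [hπ1, div_one] at h
    simpa [sq_abs] using h
  have hchi_eq : ∑ y, ((P ^ k) x y - π y) ^ 2 / π y
      = (S ^ k *ᵥ w₀) ⬝ᵥ (S ^ k *ᵥ w₀) := by
    rw [hvec]
    simp only [dotProduct]
    refine Finset.sum_congr rfl fun y _ => ?_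
    rw [div_mul_div_comm, hssq y, sq]
  calc (∑ y, |(P ^ k) x y - π y|) ^ 2
      ≤ ∑ y, ((P ^ k) x y - π y) ^ 2 / π y := hCS
    _ = (S ^ k *ᵥ w₀) ⬝ᵥ (S ^ k *ᵥ w₀) := hchi_eq
    _ = ∑ i, (d i ^ k * v i) ^ 2 := hchisq
    _ ≤ ∑ i, β ^ (2 * k) * v i ^ 2 := Finset.sum_le_sum fun i _ => hbound i
    _ = β ^ (2 * k) * (v ⬝ᵥ v) := by
        rw [← Finset.mul_sum]
        simp [dotProduct, sq]
    _ = β ^ (2 * k) * ((1 - π x) / π x) := by rw [hnorm_v, hw₀norm]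
    _ = (1 - π x) / π x * β ^ (2 * k) := mul_comm _ _
end

section
/- Let P be a reversible irreducible Markov chain on a finite state space χ with stationary measure π, let E = {(x,y) : P(x,y) > 0}, and for each ordered pair (x,y) of distinct states choose a path γ_{xy} in the graph (χ, E). Define κ = max_{e∈E} Q(e)^{-1} Σ_{γ_{xy} ∋ e} |γ_{xy}| π(x)π(y), where Q(x,y) = π(x)P(x,y). Then the second largest eigenvalue β₁ of P satisfies β₁ ≤ 1 − 1/κ. -/
/-!
For an eigenvector `φ` of `P` with eigenvalue `μ ≠ 1`, stationarity of `π` makes `φ` orthogonal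
to the constants in `L²(π)`, so `Var_π(φ) = ‖φ‖²_π`, while reversibility gives the Dirichlet form
`𝓔(φ, φ) = (1 - μ) ‖φ‖²_π`. It remains to prove the Poincaré inequality `Var_π(φ) ≤ κ 𝓔(φ, φ)`:
write `φ x - φ y` as a telescoping sum along `γ x y`, apply Cauchy–Schwarz, and exchange the
order of summation, so that each edge `e` collects exactly the weight that `κ Q(e)` bounds.
-/

namespace List

variable {α : Type*}

theorem sum_map_zip_tail_sub {G : Type*} [AddCommGroup G] (f : α → G) :
    ∀ {l : List α} {x y : α}, l.head? = some x → l.getLast? = some y →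
      ((l.zip l.tail).map fun e => f e.1 - f e.2).sum = f x - f y
  | [], _, _, hx, _ => by simp at hx
  | [a], x, y, hx, hy => by simp_all
  | a :: b :: l, x, y, hx, hy => by
    rw [getLast?_cons_cons] at hy
    obtain rfl : a = x := by simpa using hx
    have ih := sum_map_zip_tail_sub f (l := b :: l) rfl hy
    rw [tail_cons] at ih
    rw [tail_cons, zip_cons_cons, map_cons, sum_cons, ih, sub_add_sub_cancel]

theorem IsChain.rel_of_mem_zip_tail {R : α → α → Prop} :
    ∀ {l : List α}, l.IsChain R → ∀ {e : α × α}, e ∈ l.zip l.tail → R e.1 e.2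
  | [], _, _, he => by simp at he
  | [_], _, _, he => by simp at he
  | a :: b :: l, h, e, he => by
    rw [isChain_cons_cons] at h
    rcases mem_cons.1 he with rfl | he
    · exact h.1
    · exact h.2.rel_of_mem_zip_tail he

theorem zip_tail_append_cons (u : List α) (a : α) (t : List α) :
    (u ++ a :: t).zip (u ++ a :: t).tail = (u ++ [a]).zip (u ++ [a]).tail ++ (a :: t).zip t := by
  induction u with
  | nil => simp
  | cons b u ih => cases u <;> simp_all

theorem Nodup.zip_tail {l : List α} (h : l.Nodup) : (l.zip l.tail).Nodup :=
  .of_map Prod.snd <| by rw [map_snd_zip (by simp)]; exact h.sublist (tail_sublist l)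

theorem exists_append_cons_append_cons_of_not_nodup :
    ∀ {l : List α}, ¬l.Nodup → ∃ a l₁ l₂ l₃, l = l₁ ++ a :: (l₂ ++ a :: l₃)
  | [], h => absurd nodup_nil h
  | b :: t, h => by
    by_cases hb : b ∈ t
    · obtain ⟨l₂, l₃, rfl⟩ := append_of_mem hb
      exact ⟨b, [], l₂, l₃, rfl⟩
    · obtain ⟨a, l₁, l₂, l₃, rfl⟩ :=
        exists_append_cons_append_cons_of_not_nodup fun ht => h (nodup_cons.2 ⟨hb, ht⟩)
      exact ⟨a, b :: l₁, l₂, l₃, rfl⟩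

theorem exists_bypass (l : List α) :
    ∃ m : List α, m.Nodup ∧ m.head? = l.head? ∧ m.getLast? = l.getLast? ∧
      m.length ≤ l.length ∧ m.zip m.tail ⊆ l.zip l.tail := by
  by_cases hl : l.Nodup
  · exact ⟨l, hl, rfl, rfl, le_rfl, Subset.refl _⟩
  obtain ⟨a, l₁, l₂, l₃, hsplit⟩ := exists_append_cons_append_cons_of_not_nodup hl
  have hshorter : (l₁ ++ a :: l₃).length < l.length := by subst hsplit; simp
  obtain ⟨m, hm, hhead, hlast, hlen, hsub⟩ := exists_bypass (l₁ ++ a :: l₃)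
  subst hsplit
  refine ⟨m, hm, ?_, ?_, hlen.trans hshorter.le, Subset.trans hsub ?_⟩
  · rw [hhead]; cases l₁ <;> rfl
  · rw [hlast, ← cons_append, ← append_assoc, getLast?_append, getLast?_append]
    simp [getLast?_cons]
  · have hloop := zip_tail_append_cons (a :: l₂) a l₃
    rw [cons_append, tail_cons] at hloop
    rw [zip_tail_append_cons l₁ a l₃, zip_tail_append_cons l₁ a (l₂ ++ a :: l₃), hloop]
    exact ((sublist_append_right _ _).append_left _).subset
termination_by l.length

end List

open Finset Matrix

theorem Matrix.exists_mulVec_eq_smul_of_mem_spectrum {K n : Type*} [Field K] [Fintype n]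
    [DecidableEq n] {A : Matrix n n K} {μ : K} (h : μ ∈ spectrum K A) :
    ∃ v, v ≠ 0 ∧ A *ᵥ v = μ • v := by
  rw [← spectrum_toLin', ← Module.End.hasEigenvalue_iff_mem_spectrum] at h
  obtain ⟨v, hv⟩ := h.exists_hasEigenvector
  exact ⟨v, hv.2, by simpa using hv.apply_eq_smul⟩

section Stationary

variable {χ R : Type*} [Fintype χ] {P : Matrix χ χ R} {π : χ → R}

theorem vecMul_eq_of_reversible [CommSemiring R] (hP1 : ∀ x, ∑ y, P x y = 1)
    (hrev : ∀ x y, π x * P x y = π y * P y x) : π ᵥ* P = π := by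
  ext y
  simp [vecMul, dotProduct, hrev _ y, ← mul_sum, hP1]

theorem dotProduct_eq_zero_of_mulVec_eq_smul [CommRing R] [IsDomain R] (hπ : π ᵥ* P = π)
    {φ : χ → R} {μ : R} (hφ : P *ᵥ φ = μ • φ) (hμ : μ ≠ 1) : π ⬝ᵥ φ = 0 := by
  have h : μ * (π ⬝ᵥ φ) = π ⬝ᵥ φ := by
    rw [← smul_eq_mul, ← dotProduct_smul, ← hφ, dotProduct_mulVec, hπ]
  have : (μ - 1) * (π ⬝ᵥ φ) = 0 := by rw [sub_mul, h, one_mul, sub_self]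
  exact (mul_eq_zero.1 this).resolve_left (sub_ne_zero.2 hμ)

end Stationary

theorem sq_sub_le_length_mul_sum_zip_tail {α R : Type*} [DecidableEq α] [CommRing R]
    [LinearOrder R] [IsStrictOrderedRing R] {l : List α} {x y : α} (hx : l.head? = some x)
    (hy : l.getLast? = some y) (f : α → R) :
    (f x - f y) ^ 2 ≤
      ((l.length - 1 : ℕ) : R) * ∑ e ∈ (l.zip l.tail).toFinset, (f e.1 - f e.2) ^ 2 := by
  -- After loop erasure the edges are distinct, so the telescoping sum is a sum over a finset.
  obtain ⟨m, hm, hmx, hmy, hlen, hsub⟩ := l.exists_bypass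
  have hedges := hm.zip_tail
  set T := (m.zip m.tail).toFinset
  have htel : ∑ e ∈ T, (f e.1 - f e.2) = f x - f y := by
    rw [List.sum_toFinset _ hedges]
    exact List.sum_map_zip_tail_sub f (hmx.trans hx) (hmy.trans hy)
  have hcard : (#T : R) ≤ ((l.length - 1 : ℕ) : R) := by
    rw [List.toFinset_card_of_nodup hedges, List.length_zip, List.length_tail]
    exact_mod_cast by omega
  have hsum : ∑ e ∈ T, (f e.1 - f e.2) ^ 2 ≤
      ∑ e ∈ (l.zip l.tail).toFinset, (f e.1 - f e.2) ^ 2 :=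
    sum_le_sum_of_subset_of_nonneg
      (fun e he => List.mem_toFinset.2 (hsub (List.mem_toFinset.1 he))) fun _ _ _ => sq_nonneg _
  calc (f x - f y) ^ 2 = (∑ e ∈ T, (f e.1 - f e.2)) ^ 2 := by rw [htel]
    _ ≤ #T * ∑ e ∈ T, (f e.1 - f e.2) ^ 2 := sq_sum_le_card_mul_sum_sq
    _ ≤ _ := mul_le_mul hcard hsum (sum_nonneg fun _ _ => sq_nonneg _) (Nat.cast_nonneg _)

namespace MarkovChain

variable {χ : Type*} [Fintype χ]

noncomputable def dirichletForm (P : Matrix χ χ ℝ) (π φ : χ → ℝ) : ℝ :=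
  (∑ x, ∑ y, π x * P x y * (φ x - φ y) ^ 2) / 2

noncomputable def variance (π φ : χ → ℝ) : ℝ :=
  (∑ x, ∑ y, π x * π y * (φ x - φ y) ^ 2) / 2

def congestion [DecidableEq χ] (π : χ → ℝ) (γ : χ → χ → List χ) (e : χ × χ) : ℝ :=
  ∑ x, ∑ y, if x ≠ y ∧ e ∈ (γ x y).zip (γ x y).tail then
    (((γ x y).length - 1 : ℕ) : ℝ) * (π x * π y) else 0

theorem dirichletForm_eq {P : Matrix χ χ ℝ} {π : χ → ℝ} (hP1 : ∀ x, ∑ y, P x y = 1)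
    (hrev : ∀ x y, π x * P x y = π y * P y x) (φ : χ → ℝ) :
    dirichletForm P π φ = ∑ x, π x * φ x ^ 2 - ∑ x, π x * φ x * (P *ᵥ φ) x := by
  have hleft : ∑ x, ∑ y, π x * P x y * φ x ^ 2 = ∑ x, π x * φ x ^ 2 :=
    sum_congr rfl fun x _ => by rw [← sum_mul, ← mul_sum, hP1, mul_one]
  have hright : ∑ x, ∑ y, π x * P x y * φ y ^ 2 = ∑ x, π x * φ x ^ 2 := by
    rw [sum_comm]
    exact (sum_congr rfl fun y _ => sum_congr rfl fun x _ => by rw [hrev]).trans hleft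
  have hcross : ∑ x, ∑ y, π x * P x y * (φ x * φ y) = ∑ x, π x * φ x * (P *ᵥ φ) x := by
    simp_rw [mulVec, dotProduct, mul_sum]
    exact sum_congr rfl fun x _ => sum_congr rfl fun y _ => by ring
  calc dirichletForm P π φ
      = (∑ x, ∑ y, (π x * P x y * φ x ^ 2 + π x * P x y * φ y ^ 2
          - 2 * (π x * P x y * (φ x * φ y)))) / 2 := by
        rw [dirichletForm]
        congr 1
        exact sum_congr rfl fun x _ => sum_congr rfl fun y _ => by ring
    _ = _ := by
        simp_rw [sum_sub_distrib, sum_add_distrib, ← mul_sum, hleft, hright, hcross]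
        ring

theorem variance_eq (π φ : χ → ℝ) :
    variance π φ = (∑ x, π x) * ∑ x, π x * φ x ^ 2 - (∑ x, π x * φ x) ^ 2 := by
  calc variance π φ
      = (∑ x, ∑ y, (π x * φ x ^ 2 * π y + π x * (π y * φ y ^ 2)
          - 2 * (π x * φ x * (π y * φ y)))) / 2 := by
        rw [variance]
        congr 1
        exact sum_congr rfl fun x _ => sum_congr rfl fun y _ => by ring
    _ = _ := by
        simp_rw [sum_sub_distrib, sum_add_distrib, ← mul_sum, ← sum_mul]
        ring

theorem congestion_eq_zero [DecidableEq χ] {P : Matrix χ χ ℝ} {π : χ → ℝ}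
    {γ : χ → χ → List χ} (hchain : ∀ x y, x ≠ y → (γ x y).IsChain (fun a b => 0 < P a b))
    {e : χ × χ} (he : ¬0 < P e.1 e.2) : congestion π γ e = 0 :=
  sum_eq_zero fun x _ => sum_eq_zero fun y _ =>
    if_neg fun ⟨hxy, hmem⟩ => he ((hchain x y hxy).rel_of_mem_zip_tail hmem)

theorem variance_le_mul_dirichletForm [DecidableEq χ] {P : Matrix χ χ ℝ} {π : χ → ℝ}
    (hπ : ∀ x, 0 ≤ π x) (hP0 : ∀ x y, 0 ≤ P x y) {γ : χ → χ → List χ}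
    (hhead : ∀ x y, x ≠ y → (γ x y).head? = some x)
    (hlast : ∀ x y, x ≠ y → (γ x y).getLast? = some y)
    (hchain : ∀ x y, x ≠ y → (γ x y).IsChain (fun a b => 0 < P a b)) {κ : ℝ}
    (hcong : ∀ e : χ × χ, 0 < P e.1 e.2 → congestion π γ e ≤ π e.1 * P e.1 e.2 * κ)
    (φ : χ → ℝ) :
    variance π φ ≤ κ * dirichletForm P π φ := by
  set F : χ × χ → ℝ := fun e => (φ e.1 - φ e.2) ^ 2
  set c : χ → χ → χ × χ → ℝ := fun x y e => if x ≠ y ∧ e ∈ (γ x y).zip (γ x y).tail then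
    (((γ x y).length - 1 : ℕ) : ℝ) * (π x * π y) else 0
  have hpair : ∀ x y, π x * π y * (φ x - φ y) ^ 2 ≤ ∑ e, c x y e * F e := by
    intro x y
    rcases eq_or_ne x y with rfl | hxy
    · simp [c]
    calc π x * π y * (φ x - φ y) ^ 2
        ≤ π x * π y * (((γ x y).length - 1 : ℕ) *
            ∑ e ∈ ((γ x y).zip (γ x y).tail).toFinset, F e) :=
          mul_le_mul_of_nonneg_left
            (sq_sub_le_length_mul_sum_zip_tail (hhead x y hxy) (hlast x y hxy) φ)
            (mul_nonneg (hπ x) (hπ y))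
      _ = ∑ e, c x y e * F e := by
        simp only [c, hxy, ne_eq, not_false_eq_true, true_and, ite_mul, zero_mul]
        rw [← sum_filter, ← mul_assoc, mul_comm (π x * π y), mul_sum]
        congr 1
        ext e
        simp
  have hcongestion : ∀ e : χ × χ, congestion π γ e ≤ π e.1 * P e.1 e.2 * κ := by
    intro e
    by_cases he : 0 < P e.1 e.2
    · exact hcong e he
    rw [congestion_eq_zero hchain he, le_antisymm (not_lt.1 he) (hP0 _ _), mul_zero, zero_mul]
  rw [variance, dirichletForm, ← mul_div_assoc]
  gcongr
  calc ∑ x, ∑ y, π x * π y * (φ x - φ y) ^ 2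
      ≤ ∑ x, ∑ y, ∑ e, c x y e * F e :=
        sum_le_sum fun x _ => sum_le_sum fun y _ => hpair x y
    _ = ∑ e, ∑ x, ∑ y, c x y e * F e := (sum_congr rfl fun _ _ => sum_comm).trans sum_comm
    _ = ∑ e, congestion π γ e * F e := by simp_rw [congestion, sum_mul]; rfl
    _ ≤ ∑ e, π e.1 * P e.1 e.2 * κ * F e :=
      sum_le_sum fun e _ => mul_le_mul_of_nonneg_right (hcongestion e) (sq_nonneg _)
    _ = κ * ∑ x, ∑ y, π x * P x y * (φ x - φ y) ^ 2 := by
      simp_rw [mul_sum, Fintype.sum_prod_type]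
      exact sum_congr rfl fun x _ => sum_congr rfl fun y _ => by ring

end MarkovChain

theorem diaconis_stroock_geometric_bound_general
    {χ : Type*} [Fintype χ] [DecidableEq χ]
    (P : Matrix χ χ ℝ) (π : χ → ℝ)
    (hP0 : ∀ x y, 0 ≤ P x y) (hP1 : ∀ x, ∑ y, P x y = 1)
    (hπpos : ∀ x, 0 < π x) (hπ1 : ∑ x, π x = 1)
    (hrev : ∀ x y, π x * P x y = π y * P y x)
    (γ : χ → χ → List χ)
    (hhead : ∀ x y, x ≠ y → (γ x y).head? = some x)
    (hlast : ∀ x y, x ≠ y → (γ x y).getLast? = some y)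
    (hchain : ∀ x y, x ≠ y → (γ x y).Chain' (fun a b => 0 < P a b))
    (κ : ℝ) (hκ : 0 < κ)
    (hκbound : ∀ e : χ × χ, 0 < P e.1 e.2 →
      (π e.1 * P e.1 e.2)⁻¹ *
        (∑ x, ∑ y,
          if x ≠ y ∧ e ∈ (γ x y).zip (γ x y).tail then
            (((γ x y).length - 1 : ℕ) : ℝ) * (π x * π y)
          else 0) ≤ κ)
    (μ : ℝ) (hμ : μ ∈ spectrum ℝ P) (hμ1 : μ ≠ 1) :
    μ ≤ 1 - 1 / κ := by
  obtain ⟨φ, hφ0, hφ⟩ := Matrix.exists_mulVec_eq_smul_of_mem_spectrum hμ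
  have hmean : ∑ x, π x * φ x = 0 :=
    dotProduct_eq_zero_of_mulVec_eq_smul (vecMul_eq_of_reversible hP1 hrev) hφ hμ1
  have hnorm : 0 < ∑ x, π x * φ x ^ 2 := by
    obtain ⟨x, hx⟩ := Function.ne_iff.1 hφ0
    exact sum_pos' (fun y _ => by have := hπpos y; positivity)
      ⟨x, mem_univ x, mul_pos (hπpos x) (sq_pos_of_ne_zero hx)⟩
  have hrayleigh : ∑ x, π x * φ x * (P *ᵥ φ) x = μ * ∑ x, π x * φ x ^ 2 := by
    rw [hφ, mul_sum]
    exact sum_congr rfl fun x _ => by simp only [Pi.smul_apply, smul_eq_mul]; ring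
  have hpoincare := MarkovChain.variance_le_mul_dirichletForm (fun x => (hπpos x).le) hP0
    hhead hlast hchain
    (fun e he => (inv_mul_le_iff₀ (mul_pos (hπpos _) he)).1 (hκbound e he)) φ
  rw [MarkovChain.variance_eq, hπ1, hmean, MarkovChain.dirichletForm_eq hP1 hrev,
    hrayleigh] at hpoincare
  have hgap : 1 ≤ κ * (1 - μ) := le_of_mul_le_mul_right (by linarith) hnorm
  rw [le_sub_comm, div_le_iff₀ hκ]
  linarith

theorem diaconis_stroock_geometric_bound
    {χ : Type*} [Fintype χ] [DecidableEq χ] [Nonempty χ]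
    (P : Matrix χ χ ℝ) (π : χ → ℝ)
    (hP0 : ∀ x y, 0 ≤ P x y) (hP1 : ∀ x, ∑ y, P x y = 1)
    (hπpos : ∀ x, 0 < π x) (hπ1 : ∑ x, π x = 1)
    (hrev : ∀ x y, π x * P x y = π y * P y x)
    (hirr : ∀ x y, ∃ k : ℕ, 0 < (P ^ k) x y)
    (γ : χ → χ → List χ)
    (hhead : ∀ x y, x ≠ y → (γ x y).head? = some x)
    (hlast : ∀ x y, x ≠ y → (γ x y).getLast? = some y)
    (hchain : ∀ x y, x ≠ y → (γ x y).Chain' (fun a b => 0 < P a b))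
    (κ : ℝ) (hκ : 0 < κ)
    (hκbound : ∀ e : χ × χ, 0 < P e.1 e.2 →
      (π e.1 * P e.1 e.2)⁻¹ *
        (∑ x, ∑ y,
          if x ≠ y ∧ e ∈ (γ x y).zip (γ x y).tail then
            (((γ x y).length - 1 : ℕ) : ℝ) * (π x * π y)
          else 0) ≤ κ)
    (μ : ℝ) (hμ : μ ∈ spectrum ℝ P) (hμ1 : μ ≠ 1) :
    μ ≤ 1 - 1 / κ :=
  diaconis_stroock_geometric_bound_general P π hP0 hP1 hπpos hπ1 hrev γ hhead hlast hchain κ hκ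
    hκbound μ hμ hμ1
end
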